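/- arXiv:1303.3033 — 2 statements merged into one kernel-verified Lean document; each statement's English description precedes it below -/
import Mathlib

section
/- For all p ≥ 2 and dimension d ≥ 1, there exists a constant C > 0 such that for all Schwartz functions f on ℝ^d, ‖f‖_{L²} ≤ C ‖f‖_{L^p}^θ ‖ |x| f ‖_{L²}^{1-θ}, where θ = 1/(1 + d(1/2 − 1/p)). -/
open MeasureTheory Metric Filter Topology Module
open scoped ENNReal SchwartzMap

/-!
Split `‖f‖₂` over the ball `B_R` and its complement. On the ball, Hölder gives
`‖f‖_{L²(B_R)} ≤ |B_R|^{1/2-1/p} ‖f‖_p = |B_1|^{1/2-1/p} R^α ‖f‖_p` with `α = d(1/2-1/p)`;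
off the ball `|x| ≥ R`, so `‖f‖_{L²(B_Rᶜ)} ≤ R⁻¹ ‖|x| f‖₂`. The radius
`R = (‖|x| f‖₂ / ‖f‖_p)^θ`, `θ = 1/(1+α)`, makes both terms equal to `‖f‖_p^θ ‖|x| f‖₂^{1-θ}`.
-/

theorem Real.le_mul_rpow_mul_rpow_of_forall_le {x a b k α : ℝ} (ha : 0 ≤ a) (hb : 0 ≤ b)
    (hα : 0 ≤ α) (h : ∀ R : ℝ, 0 < R → x ≤ a * (R ^ α * k) + R⁻¹ * b) :
    x ≤ (k + 1) * a ^ (1 / (1 + α)) * b ^ (1 - 1 / (1 + α)) := by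
  set θ := 1 / (1 + α) with hθ
  have hθ0 : 0 < θ := by positivity
  have hθα : θ * α = 1 - θ := by rw [hθ]; field_simp; ring
  rcases ha.eq_or_lt with rfl | ha
  · rw [Real.zero_rpow hθ0.ne', mul_zero, zero_mul]
    have hlim : Tendsto (fun R : ℝ => R⁻¹ * b) atTop (𝓝 0) := by
      simpa using tendsto_inv_atTop_zero.mul_const b
    exact ge_of_tendsto hlim ((eventually_gt_atTop 0).mono fun R hR => by simpa using h R hR)
  rcases hb.eq_or_lt with rfl | hb
  · rcases hα.eq_or_lt with rfl | hα
    · simpa [hθ] using (h 1 one_pos).trans (by nlinarith)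
    · have hθ1 : 0 < 1 - θ := by rw [← hθα]; positivity
      rw [Real.zero_rpow hθ1.ne', mul_zero]
      have hlim : Tendsto (fun R : ℝ => a * (R ^ α * k)) (𝓝[>] 0) (𝓝 0) := by
        have := ((Real.continuousAt_rpow_const 0 α (Or.inr hα.le)).tendsto.mul_const k).const_mul a
        simpa [Real.zero_rpow hα.ne'] using this.mono_left nhdsWithin_le_nhds
      exact ge_of_tendsto hlim (eventually_mem_nhdsWithin.mono fun R hR => by simpa using h R hR)
  · have hba : 0 < b / a := div_pos hb ha
    have hpow_term : a * ((b / a) ^ θ) ^ α = a ^ θ * b ^ (1 - θ) := by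
      rw [← Real.rpow_mul hba.le, hθα, Real.div_rpow hb.le ha.le, Real.rpow_sub ha, Real.rpow_one]
      field_simp
    have hinv_term : ((b / a) ^ θ)⁻¹ * b = a ^ θ * b ^ (1 - θ) := by
      rw [Real.div_rpow hb.le ha.le, Real.rpow_sub hb, Real.rpow_one]
      field_simp
    calc x ≤ a * (((b / a) ^ θ) ^ α * k) + ((b / a) ^ θ)⁻¹ * b := h _ (by positivity)
      _ = _ := by rw [← mul_assoc, hpow_term, hinv_term]; ring

theorem ENNReal.le_mul_rpow_mul_rpow_of_forall_le {x a b k : ℝ≥0∞} {α : ℝ} (ha : a ≠ ∞)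
    (hb : b ≠ ∞) (hk : k ≠ ∞) (hα : 0 ≤ α)
    (h : ∀ R : ℝ, 0 < R → x ≤ a * (ENNReal.ofReal (R ^ α) * k) + ENNReal.ofReal R⁻¹ * b) :
    x ≤ (k + 1) * a ^ (1 / (1 + α)) * b ^ (1 - 1 / (1 + α)) := by
  have hx : x ≠ ∞ := ne_top_of_le_ne_top (by finiteness) (h 1 one_pos)
  have hθ : 0 ≤ 1 - 1 / (1 + α) := by
    rw [sub_nonneg, div_le_one (by positivity)]; linarith
  have hreal := Real.le_mul_rpow_mul_rpow_of_forall_le (x := x.toReal) (k := k.toReal)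
    toReal_nonneg toReal_nonneg hα fun R hR => by
      have := ENNReal.toReal_mono (by finiteness) (h R hR)
      rwa [toReal_add (by finiteness) (by finiteness), toReal_mul, toReal_mul, toReal_mul,
        toReal_ofReal (by positivity), toReal_ofReal (by positivity)] at this
  calc x = ENNReal.ofReal x.toReal := (ofReal_toReal hx).symm
    _ ≤ _ := ofReal_le_ofReal hreal
    _ = _ := by
      rw [ofReal_mul (by positivity), ofReal_mul (by positivity),
        ← ofReal_rpow_of_nonneg toReal_nonneg (by positivity),
        ← ofReal_rpow_of_nonneg toReal_nonneg hθ, ofReal_add toReal_nonneg zero_le_one,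
        ofReal_toReal ha, ofReal_toReal hb, ofReal_toReal hk, ofReal_one]

section Localization

variable {α F : Type*} [MeasurableSpace α] [NormedAddCommGroup F] {μ : Measure α} {f : α → F}
  {p q : ℝ≥0∞}

theorem MeasureTheory.eLpNorm_le_eLpNorm_restrict_add_eLpNorm_restrict_compl
    (hf : AEStronglyMeasurable f μ) (hp : 1 ≤ p) {s : Set α} (hs : MeasurableSet s) :
    eLpNorm f p μ ≤ eLpNorm f p (μ.restrict s) + eLpNorm f p (μ.restrict sᶜ) := by
  conv_lhs => rw [← s.indicator_self_add_compl f]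
  rw [← eLpNorm_indicator_eq_eLpNorm_restrict hs,
    ← eLpNorm_indicator_eq_eLpNorm_restrict hs.compl]
  exact eLpNorm_add_le (hf.indicator hs) (hf.indicator hs.compl) hp

theorem MeasureTheory.eLpNorm_restrict_le_eLpNorm_mul_rpow_measure (hpq : p ≤ q)
    (hf : AEStronglyMeasurable f μ) (s : Set α) :
    eLpNorm f p (μ.restrict s) ≤ eLpNorm f q μ * μ s ^ (1 / p.toReal - 1 / q.toReal) := by
  calc eLpNorm f p (μ.restrict s)
      ≤ eLpNorm f q (μ.restrict s) * μ.restrict s Set.univ ^ (1 / p.toReal - 1 / q.toReal) :=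
        eLpNorm_le_eLpNorm_mul_rpow_measure_univ hpq hf.restrict
    _ ≤ _ := by
        rw [Measure.restrict_apply_univ]
        gcongr
        exact Measure.restrict_le_self

end Localization

section Ball

variable {E F : Type*} [NormedAddCommGroup E] [MeasurableSpace E] [OpensMeasurableSpace E]
  [NormedAddCommGroup F]

theorem MeasureTheory.eLpNorm_restrict_compl_ball_le (μ : Measure E) (f : E → F) (p : ℝ≥0∞)
    {R : ℝ} (hR : 0 < R) :
    eLpNorm f p (μ.restrict (ball 0 R)ᶜ) ≤
      ENNReal.ofReal R⁻¹ * eLpNorm (fun x => ‖x‖ * ‖f x‖) p μ := by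
  have hweight : ∀ x ∈ (ball (0 : E) R)ᶜ, ‖f x‖ ≤ R⁻¹ * ‖‖x‖ * ‖f x‖‖ := fun x hx => by
    rw [Set.mem_compl_iff, mem_ball_zero_iff, not_lt] at hx
    rw [norm_mul, norm_norm, norm_norm, ← mul_assoc]
    exact le_mul_of_one_le_left (norm_nonneg _) ((one_le_inv_mul₀ hR).2 hx)
  calc eLpNorm f p (μ.restrict (ball 0 R)ᶜ)
      ≤ ENNReal.ofReal R⁻¹ * eLpNorm (fun x => ‖x‖ * ‖f x‖) p (μ.restrict (ball 0 R)ᶜ) :=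
        eLpNorm_le_mul_eLpNorm_of_ae_le_mul
          (ae_restrict_of_forall_mem measurableSet_ball.compl hweight) p
    _ ≤ _ := by gcongr; exact Measure.restrict_le_self

theorem MeasureTheory.eLpNorm_le_mul_measure_ball_rpow_add
    {μ : Measure E} {f : E → F} (hf : AEStronglyMeasurable f μ) {p q : ℝ≥0∞} (hp : 1 ≤ p)
    (hpq : p ≤ q) {R : ℝ} (hR : 0 < R) :
    eLpNorm f p μ ≤ eLpNorm f q μ * μ (ball 0 R) ^ (1 / p.toReal - 1 / q.toReal) +
      ENNReal.ofReal R⁻¹ * eLpNorm (fun x => ‖x‖ * ‖f x‖) p μ :=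
  (eLpNorm_le_eLpNorm_restrict_add_eLpNorm_restrict_compl hf hp measurableSet_ball).trans <|
    add_le_add (eLpNorm_restrict_le_eLpNorm_mul_rpow_measure hpq hf _)
      (eLpNorm_restrict_compl_ball_le μ f p hR)

end Ball

theorem MeasureTheory.Measure.addHaar_ball_rpow {E : Type*} [NormedAddCommGroup E]
    [NormedSpace ℝ E] [MeasurableSpace E] [BorelSpace E] [FiniteDimensional ℝ E]
    (μ : Measure E) [μ.IsAddHaarMeasure] {R : ℝ} (hR : 0 < R) (e : ℝ) :
    μ (ball 0 R) ^ e = ENNReal.ofReal (R ^ (finrank ℝ E * e)) * μ (ball 0 1) ^ e := by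
  rw [μ.addHaar_ball_of_pos 0 hR, ENNReal.mul_rpow_of_ne_top ENNReal.ofReal_ne_top
    measure_ball_lt_top.ne, ENNReal.ofReal_rpow_of_pos (by positivity), ← Real.rpow_natCast,
    ← Real.rpow_mul hR.le]

theorem SchwartzMap.eLpNorm_norm_mul_lt_top {E F : Type*} [NormedAddCommGroup E]
    [InnerProductSpace ℝ E] [MeasurableSpace E] [BorelSpace E] [NormedAddCommGroup F]
    [NormedSpace ℝ F] (f : 𝓢(E, F)) (p : ℝ≥0∞) (μ : Measure E) [μ.HasTemperateGrowth] :
    eLpNorm (fun x => ‖x‖ * ‖f x‖) p μ < ∞ := by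
  have hweight : (fun x : E => 1 + ‖x‖ ^ 2).HasTemperateGrowth :=
    (Function.HasTemperateGrowth.const 1).add (Function.hasTemperateGrowth_norm_sq E)
  refine (eLpNorm_mono fun x => ?_).trans_lt
    ((smulLeftCLM F (fun x : E => 1 + ‖x‖ ^ 2) f).eLpNorm_lt_top p μ)
  rw [smulLeftCLM_apply_apply hweight, norm_smul, norm_mul, norm_norm, norm_norm,
    Real.norm_of_nonneg (by positivity)]
  gcongr
  nlinarith [sq_nonneg (‖x‖ - 1)]

theorem dual_nash_inequality_general (d : ℕ) (p : ℝ) (hp : 2 ≤ p) :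
    ∃ C : ℝ, 0 < C ∧ ∀ f : SchwartzMap (EuclideanSpace ℝ (Fin d)) ℂ,
      eLpNorm (⇑f) 2 volume ≤
        ENNReal.ofReal C *
          eLpNorm (⇑f) (ENNReal.ofReal p) volume ^ (1 / (1 + (d : ℝ) * (1/2 - 1/p))) *
          eLpNorm (fun x => ‖x‖ * ‖f x‖) 2 volume ^
            (1 - 1 / (1 + (d : ℝ) * (1/2 - 1/p))) := by
  have h2p : (2 : ℝ≥0∞) ≤ ENNReal.ofReal p := by
    simpa using ENNReal.ofReal_le_ofReal hp
  have hexp : 1 / (2 : ℝ≥0∞).toReal - 1 / (ENNReal.ofReal p).toReal = 1 / 2 - 1 / p := by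
    rw [ENNReal.toReal_ofReal (by linarith), ENNReal.toReal_ofNat]
  have he : 0 ≤ 1 / 2 - 1 / p := by
    rw [sub_nonneg]; gcongr
  set K := volume (ball (0 : EuclideanSpace ℝ (Fin d)) 1) ^ (1 / 2 - 1 / p)
  have hK : K ≠ ∞ := ENNReal.rpow_ne_top_of_nonneg he measure_ball_lt_top.ne
  refine ⟨K.toReal + 1, by positivity, fun f => ?_⟩
  rw [ENNReal.ofReal_add ENNReal.toReal_nonneg zero_le_one, ENNReal.ofReal_toReal hK,
    ENNReal.ofReal_one]
  refine ENNReal.le_mul_rpow_mul_rpow_of_forall_le (f.eLpNorm_lt_top _ volume).ne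
    (f.eLpNorm_norm_mul_lt_top 2 volume).ne hK (mul_nonneg d.cast_nonneg he) fun R hR => ?_
  have h := eLpNorm_le_mul_measure_ball_rpow_add (μ := volume) f.continuous.aestronglyMeasurable
    one_le_two h2p hR
  rwa [hexp, volume.addHaar_ball_rpow hR, finrank_euclideanSpace_fin] at h

/-- Dual Nash / localization inequality: for `p ≥ 2` and `d ≥ 1` there is `C > 0` such that
for all Schwartz functions `f` on `ℝ^d`,
`‖f‖_{L²} ≤ C ‖f‖_{L^p}^θ ‖|x| f‖_{L²}^{1-θ}` with `θ = 1/(1 + d(1/2 - 1/p))`. -/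
theorem dual_nash_inequality (d : ℕ) (hd : 1 ≤ d) (p : ℝ) (hp : 2 ≤ p) :
    ∃ C : ℝ, 0 < C ∧ ∀ f : SchwartzMap (EuclideanSpace ℝ (Fin d)) ℂ,
      eLpNorm (⇑f) 2 volume ≤
        ENNReal.ofReal C *
          eLpNorm (⇑f) (ENNReal.ofReal p) volume ^ (1 / (1 + (d : ℝ) * (1/2 - 1/p))) *
          eLpNorm (fun x => ‖x‖ * ‖f x‖) 2 volume ^
            (1 - 1 / (1 + (d : ℝ) * (1/2 - 1/p))) :=
  dual_nash_inequality_general d p hp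
end

section
/- Let u ∈ L^∞(ℝ₊; Σ) (i.e., sup_t (‖u(t)‖_{H¹} + ‖|x|u(t)‖_{L²}) < ∞) satisfy (d/dt)‖u(t)‖²_{L²} + 2a‖u(t)‖^{2σ₂+2}_{L^{2σ₂+2}} = 0 with a > 0, σ₂ > 0. Then there exists C > 0 with ‖u(t)‖²_{L²} ≤ C t^{−2/((d+2)σ₂)} for all t ≥ 1. -/
open MeasureTheory Set Metric Module
open scoped ENNReal

/-!
The bounded second moment keeps the mass from escaping to infinity: on the ball of radius `R`
Hölder's inequality controls the mass by `‖u‖_{2σ₂+2}`, and outside it the mass is at most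
`R⁻² ∫ |x|² |u|²`. Optimising in `R` gives the dual Nash inequality
`‖u‖₂^{2p} ≲ ‖u‖_{2σ₂+2}^{2σ₂+2}` with `p = 1 + (d + 2) σ₂ / 2`, so `y = ‖u‖₂²` satisfies
`y' ≤ -c y^p`. Such a `y` stays below `K t^{-1/(p-1)}`, since for large `K` this barrier
decays more slowly than the differential inequality forces `y` to.
-/

theorem le_mul_rpow_neg_of_hasDerivAt_le {y y' : ℝ → ℝ} {c p q K : ℝ} (hK : 0 < K)
    (hqp : q * (p - 1) = 1) (hKc : q < c * K ^ (p - 1))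
    (hy : ∀ t, 1 ≤ t → HasDerivAt y (y' t) t) (hy' : ∀ t, 1 ≤ t → y' t ≤ -(c * y t ^ p))
    (hy₁ : y 1 ≤ K) {t : ℝ} (ht : 1 ≤ t) : y t ≤ K * t ^ (-q) := by
  have hbarrier : ∀ x : ℝ, 0 < x →
      HasDerivAt (fun s => K * s ^ (-q)) (K * (-q * x ^ (-q - 1))) x :=
    fun x hx => (Real.hasDerivAt_rpow_const (Or.inl hx.ne')).const_mul K
  refine image_le_of_deriv_right_lt_deriv_boundary' (f' := y')
    (fun x hx => (hy x hx.1).continuousAt.continuousWithinAt)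
    (fun x hx => (hy x hx.1).hasDerivWithinAt) (by simpa using hy₁)
    (fun x hx => (hbarrier x (by linarith [hx.1])).continuousAt.continuousWithinAt)
    (fun x hx => (hbarrier x (by linarith [hx.1])).hasDerivWithinAt) ?_ ⟨ht, le_rfl⟩
  -- at a first contact point `y` is forced down faster than the barrier decays
  intro x hx hyx
  have hx₀ : 0 < x := by linarith [hx.1]
  have hpow : y x ^ p = K ^ (p - 1) * K * x ^ (-q - 1) := by
    have hexp : -q * p = -q - 1 := by linarith
    rw [hyx, Real.mul_rpow hK.le (by positivity), ← Real.rpow_mul hx₀.le, hexp,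
      Real.rpow_sub_one hK.ne', div_mul_cancel₀ _ hK.ne']
  have hxq : 0 < K * x ^ (-q - 1) := by positivity
  calc y' x ≤ -(c * y x ^ p) := hy' x hx.1
    _ = -((c * K ^ (p - 1)) * (K * x ^ (-q - 1))) := by rw [hpow]; ring
    _ < -(q * (K * x ^ (-q - 1))) := neg_lt_neg (mul_lt_mul_of_pos_right hKc hxq)
    _ = K * (-q * x ^ (-q - 1)) := by ring

theorem exists_le_mul_rpow_neg_of_hasDerivAt_le {y y' : ℝ → ℝ} {c p : ℝ} (hc : 0 < c)
    (hp : 1 < p) (hy : ∀ t, 1 ≤ t → HasDerivAt y (y' t) t)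
    (hy' : ∀ t, 1 ≤ t → y' t ≤ -(c * y t ^ p)) :
    ∃ K > 0, ∀ t, 1 ≤ t → y t ≤ K * t ^ (-(p - 1)⁻¹) := by
  set q := (p - 1)⁻¹
  have hq : 0 < q := inv_pos.2 (sub_pos.2 hp)
  have hqp : q * (p - 1) = 1 := inv_mul_cancel₀ (sub_pos.2 hp).ne'
  set K₀ := (2 * q / c) ^ q
  have hK₀ : 0 < K₀ := by positivity
  refine ⟨max (y 1) K₀, lt_max_of_lt_right hK₀, fun t ht =>
    le_mul_rpow_neg_of_hasDerivAt_le (lt_max_of_lt_right hK₀) hqp ?_ hy hy' (le_max_left _ _) ht⟩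
  calc q < c * (2 * q / c) := by field_simp; linarith
    _ = c * K₀ ^ (p - 1) := by rw [← Real.rpow_mul (by positivity), hqp, Real.rpow_one]
    _ ≤ c * max (y 1) K₀ ^ (p - 1) :=
      mul_le_mul_of_nonneg_left (Real.rpow_le_rpow hK₀.le (le_max_right _ _) (by linarith)) hc.le

theorem integral_sub_div_sq_le_setIntegral_closedBall {E : Type*} [NormedAddCommGroup E]
    [MeasurableSpace E] [OpensMeasurableSpace E] {μ : Measure E} {g : E → ℝ} (hg : 0 ≤ g)
    (hg_int : Integrable g μ) (hxg_int : Integrable (fun x => ‖x‖ ^ 2 * g x) μ) {R : ℝ}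
    (hR : 0 < R) :
    ∫ x, g x ∂μ - (∫ x, ‖x‖ ^ 2 * g x ∂μ) / R ^ 2 ≤ ∫ x in closedBall 0 R, g x ∂μ := by
  have hs : MeasurableSet (closedBall (0 : E) R) := measurableSet_closedBall
  have htail : ∫ x in (closedBall 0 R)ᶜ, g x ∂μ ≤
      ∫ x in (closedBall 0 R)ᶜ, ‖x‖ ^ 2 * g x / R ^ 2 ∂μ := by
    refine setIntegral_mono_on hg_int.integrableOn (hxg_int.div_const _).integrableOn hs.compl
      fun x hx => ?_
    have hRx : R ^ 2 ≤ ‖x‖ ^ 2 := by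
      simp only [mem_compl_iff, mem_closedBall, dist_zero_right, not_le] at hx
      gcongr
    rw [le_div_iff₀ (by positivity)]
    nlinarith [mul_le_mul_of_nonneg_right hRx (hg x)]
  have hmoment : ∫ x in (closedBall 0 R)ᶜ, ‖x‖ ^ 2 * g x / R ^ 2 ∂μ ≤
      (∫ x, ‖x‖ ^ 2 * g x ∂μ) / R ^ 2 := by
    rw [integral_div]
    exact div_le_div_of_nonneg_right
      (setIntegral_le_integral hxg_int (.of_forall fun x => mul_nonneg (sq_nonneg _) (hg x)))
      (by positivity)
  linarith [integral_add_compl hs hg_int]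

theorem setIntegral_rpow_le_integral_rpow_mul_measureReal {α : Type*} [MeasurableSpace α]
    {μ : Measure α} {g : α → ℝ} {r : ℝ} (hr : 1 < r) (hg : 0 ≤ g)
    (hgr : MemLp g (ENNReal.ofReal r) μ) {s : Set α} (hs : MeasurableSet s) (hμs : μ s ≠ ∞) :
    (∫ x in s, g x ∂μ) ^ r ≤ (∫ x, g x ^ r ∂μ) * μ.real s ^ (r - 1) := by
  have hconj := Real.HolderConjugate.conjExponent hr
  have hholder := integral_mul_le_Lp_mul_Lq_of_nonneg hconj (.of_forall hg)
    (.of_forall (indicator_nonneg fun _ _ => zero_le_one)) hgr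
    (memLp_indicator_const _ hs (1 : ℝ) (Or.inr hμs))
  have hlhs : ∫ x, g x * s.indicator (fun _ => (1 : ℝ)) x ∂μ = ∫ x in s, g x ∂μ := by
    simp_rw [← indicator_mul_right, mul_one, integral_indicator hs]
  have hrhs : ∫ x, s.indicator (fun _ => (1 : ℝ)) x ^ r.conjExponent ∂μ = μ.real s := by
    have hq : r.conjExponent ≠ 0 := hconj.symm.ne_zero
    have hpow : (fun x => s.indicator (fun _ => (1 : ℝ)) x ^ r.conjExponent) =
        s.indicator fun _ => 1 := by
      funext x
      by_cases hx : x ∈ s <;> simp [hx, Real.zero_rpow hq]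
    rw [hpow, integral_indicator_const _ hs, smul_eq_mul, mul_one]
  rw [hlhs, hrhs] at hholder
  have hexp : 1 / r.conjExponent * r = r - 1 := by
    rw [one_div, ← hconj.one_sub_inv]; field_simp
  calc (∫ x in s, g x ∂μ) ^ r
      ≤ ((∫ x, g x ^ r ∂μ) ^ (1 / r) * μ.real s ^ (1 / r.conjExponent)) ^ r := by
        gcongr
        exact setIntegral_nonneg hs fun x _ => hg x
    _ = (∫ x, g x ^ r ∂μ) * μ.real s ^ (r - 1) := by
        have hM : 0 ≤ ∫ x, g x ^ r ∂μ := integral_nonneg fun x => Real.rpow_nonneg (hg x) r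
        rw [Real.mul_rpow (by positivity) (by positivity), ← Real.rpow_mul hM,
          ← Real.rpow_mul measureReal_nonneg, one_div_mul_cancel (by linarith), Real.rpow_one,
          hexp]

theorem exists_pos_mul_integral_rpow_le_integral_rpow {E : Type*} [NormedAddCommGroup E]
    [NormedSpace ℝ E] [FiniteDimensional ℝ E] [MeasurableSpace E] [BorelSpace E]
    (μ : Measure E) [μ.IsAddHaarMeasure] {r B : ℝ} (hr : 1 < r) (hB : 0 < B) :
    ∃ c > 0, ∀ g : E → ℝ, 0 ≤ g → Integrable g μ → MemLp g (ENNReal.ofReal r) μ →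
      Integrable (fun x => ‖x‖ ^ 2 * g x) μ → ∫ x, ‖x‖ ^ 2 * g x ∂μ ≤ B →
      c * (∫ x, g x ∂μ) ^ (r + finrank ℝ E * (r - 1) / 2) ≤ ∫ x, g x ^ r ∂μ := by
  set V := μ.real (closedBall (0 : E) 1)
  have hV : 0 < V :=
    ENNReal.toReal_pos (measure_closedBall_pos μ _ one_pos).ne' measure_closedBall_lt_top.ne
  set e : ℝ := finrank ℝ E * (r - 1) / 2
  have he : 0 ≤ e := by have : (1 : ℝ) ≤ r := hr.le; positivity
  refine ⟨(2 ^ r * V ^ (r - 1) * (2 * B) ^ e)⁻¹, by positivity,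
    fun g hg hg_int hgr hxg_int hxg => ?_⟩
  set m := ∫ x, g x ∂μ
  set M := ∫ x, g x ^ r ∂μ
  have hM : 0 ≤ M := integral_nonneg fun x => Real.rpow_nonneg (hg x) r
  rcases (show 0 ≤ m from integral_nonneg hg).eq_or_lt with hm | hm
  · rw [← hm, Real.zero_rpow (by positivity), mul_zero]
    exact hM
  -- the radius beyond which the second moment leaves at most half of the mass
  set R := Real.sqrt (2 * B / m)
  have hR : 0 < R := Real.sqrt_pos.2 (by positivity)
  have hR2 : R ^ 2 = 2 * B / m := Real.sq_sqrt (by positivity)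
  have hhalf : m / 2 ≤ ∫ x in closedBall 0 R, g x ∂μ := by
    have := integral_sub_div_sq_le_setIntegral_closedBall hg hg_int hxg_int hR
    have : (∫ x, ‖x‖ ^ 2 * g x ∂μ) / R ^ 2 ≤ m / 2 := by
      rw [hR2, div_le_iff₀ (by positivity)]; field_simp; linarith
    linarith
  have hball : μ.real (closedBall (0 : E) R) ^ (r - 1) = V ^ (r - 1) * (2 * B / m) ^ e := by
    rw [Measure.addHaar_real_closedBall' μ _ hR.le, Real.mul_rpow (by positivity) hV.le, mul_comm,
      ← hR2, ← Real.rpow_natCast, ← Real.rpow_natCast R 2, ← Real.rpow_mul hR.le,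
      ← Real.rpow_mul hR.le]
    congr 2
    push_cast
    ring
  have hkey : (m / 2) ^ r ≤ M * (V ^ (r - 1) * (2 * B / m) ^ e) := by
    rw [← hball]
    calc (m / 2) ^ r ≤ (∫ x in closedBall 0 R, g x ∂μ) ^ r := by gcongr
      _ ≤ M * μ.real (closedBall (0 : E) R) ^ (r - 1) :=
        setIntegral_rpow_le_integral_rpow_mul_measureReal hr hg hgr measurableSet_closedBall
          measure_closedBall_lt_top.ne
  rw [Real.div_rpow hm.le zero_le_two, Real.div_rpow (by positivity) hm.le] at hkey
  have hme : 0 < m ^ e := by positivity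
  rw [div_le_iff₀ (by positivity)] at hkey
  rw [Real.rpow_add hm, inv_mul_le_iff₀ (by positivity)]
  calc m ^ r * m ^ e ≤ M * (V ^ (r - 1) * ((2 * B) ^ e / m ^ e)) * 2 ^ r * m ^ e := by gcongr
    _ = 2 ^ r * V ^ (r - 1) * (2 * B) ^ e * M := by field_simp

theorem MeasureTheory.MemLp.norm_sq {α F : Type*} [MeasurableSpace α] [NormedAddCommGroup F]
    {μ : Measure α} {f : α → F} {s : ℝ} (hf : MemLp f (ENNReal.ofReal (2 * s)) μ) :
    MemLp (fun x => ‖f x‖ ^ 2) (ENNReal.ofReal s) μ := by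
  have h := hf.norm_rpow_div 2
  rw [ENNReal.toReal_ofNat, ← ENNReal.ofReal_ofNat 2, ← ENNReal.ofReal_div_of_pos two_pos,
    mul_div_cancel_left₀ _ two_ne_zero] at h
  simpa only [Real.rpow_two] using h

theorem asymptotic_extinction_general (d : ℕ) (a σ₂ : ℝ) (ha : 0 < a) (hσ₂ : 0 < σ₂)
    (u : ℝ → EuclideanSpace ℝ (Fin d) → ℂ)
    (hmem2 : ∀ t : ℝ, MemLp (u t) 2 volume)
    (hmemp : ∀ t : ℝ, MemLp (u t) (ENNReal.ofReal (2*σ₂+2)) volume)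
    (hxint : ∀ t : ℝ, Integrable (fun x : EuclideanSpace ℝ (Fin d) => ‖x‖ ^ 2 * ‖u t x‖ ^ 2))
    (hbound : ∃ B : ℝ, ∀ t : ℝ, 0 ≤ t →
      (∫ x, ‖u t x‖ ^ 2) ≤ B ∧
      (∫ x : EuclideanSpace ℝ (Fin d),
        ∑ j : Fin d, ‖fderiv ℝ (u t) x (EuclideanSpace.single j 1)‖ ^ 2) ≤ B ∧
      (∫ x : EuclideanSpace ℝ (Fin d), ‖x‖ ^ 2 * ‖u t x‖ ^ 2) ≤ B)
    (hdiss : ∀ t : ℝ, 0 ≤ t →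
      HasDerivAt (fun s => ∫ x, ‖u s x‖ ^ 2) (-2 * a * ∫ x, ‖u t x‖ ^ (2*σ₂+2)) t) :
    ∃ C : ℝ, 0 < C ∧ ∀ t : ℝ, 1 ≤ t →
      (∫ x, ‖u t x‖ ^ 2) ≤ C * t ^ (-(2 / (((d : ℝ) + 2) * σ₂))) := by
  obtain ⟨B, hB⟩ := hbound
  obtain ⟨c, hc, hnash⟩ := exists_pos_mul_integral_rpow_le_integral_rpow
    (volume : Measure (EuclideanSpace ℝ (Fin d))) (r := σ₂ + 1) (B := max B 1) (by linarith)
    (by positivity)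
  have hnorm_pow (z : ℂ) : (‖z‖ ^ 2) ^ (σ₂ + 1) = ‖z‖ ^ (2 * σ₂ + 2) := by
    rw [← Real.rpow_natCast_mul (norm_nonneg z)]
    ring_nf
  have hdissipation : ∀ t, 1 ≤ t → -2 * a * ∫ x, ‖u t x‖ ^ (2 * σ₂ + 2) ≤
      -(2 * a * c * (∫ x, ‖u t x‖ ^ 2) ^ (σ₂ + 1 + d * σ₂ / 2)) := by
    intro t ht
    have h := hnash (fun x => ‖u t x‖ ^ 2) (fun x => sq_nonneg _)
      ((hmem2 t).integrable_norm_pow two_ne_zero)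
      (MemLp.norm_sq (by rw [mul_add_one]; exact hmemp t)) (hxint t)
      ((hB t (by linarith)).2.2.trans (le_max_left _ _))
    simp only [finrank_euclideanSpace_fin, add_sub_cancel_right, hnorm_pow] at h
    nlinarith
  obtain ⟨C, hC, hdecay⟩ := exists_le_mul_rpow_neg_of_hasDerivAt_le (by positivity)
    (by have : 0 ≤ (d : ℝ) * σ₂ / 2 := (by positivity); linarith)
    (fun t ht => hdiss t (by linarith)) hdissipation
  refine ⟨C, hC, fun t ht => (hdecay t ht).trans_eq ?_⟩
  rw [show σ₂ + 1 + d * σ₂ / 2 - 1 = ((d : ℝ) + 2) * σ₂ / 2 by ring, inv_div]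

/-- Asymptotic extinction under full confinement: if `u ∈ L^∞(ℝ₊; Σ)` (uniform bounds
on mass, kinetic energy and second moment) satisfies the mass dissipation identity
`(d/dt)‖u(t)‖² + 2a‖u(t)‖_{2σ₂+2}^{2σ₂+2} = 0` with `a > 0`, `σ₂ > 0`, then
`‖u(t)‖² ≤ C t^{-2/((d+2)σ₂)}` for `t ≥ 1`. -/
theorem asymptotic_extinction (d : ℕ) (hd : 1 ≤ d) (a σ₂ : ℝ) (ha : 0 < a) (hσ₂ : 0 < σ₂)
    (u : ℝ → EuclideanSpace ℝ (Fin d) → ℂ)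
    (hmem2 : ∀ t : ℝ, MemLp (u t) 2 volume)
    (hmemp : ∀ t : ℝ, MemLp (u t) (ENNReal.ofReal (2*σ₂+2)) volume)
    (hxint : ∀ t : ℝ, Integrable (fun x : EuclideanSpace ℝ (Fin d) => ‖x‖ ^ 2 * ‖u t x‖ ^ 2))
    (hbound : ∃ B : ℝ, ∀ t : ℝ, 0 ≤ t →
      (∫ x, ‖u t x‖ ^ 2) ≤ B ∧
      (∫ x : EuclideanSpace ℝ (Fin d),
        ∑ j : Fin d, ‖fderiv ℝ (u t) x (EuclideanSpace.single j 1)‖ ^ 2) ≤ B ∧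
      (∫ x : EuclideanSpace ℝ (Fin d), ‖x‖ ^ 2 * ‖u t x‖ ^ 2) ≤ B)
    (hdiss : ∀ t : ℝ, 0 ≤ t →
      HasDerivAt (fun s => ∫ x, ‖u s x‖ ^ 2) (-2 * a * ∫ x, ‖u t x‖ ^ (2*σ₂+2)) t) :
    ∃ C : ℝ, 0 < C ∧ ∀ t : ℝ, 1 ≤ t →
      (∫ x, ‖u t x‖ ^ 2) ≤ C * t ^ (-(2 / (((d : ℝ) + 2) * σ₂))) :=
  asymptotic_extinction_general d a σ₂ ha hσ₂ u hmem2 hmemp hxint hbound hdiss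
end
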